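/- arXiv:1509.03472 — 5 statements merged into one kernel-verified Lean document; each statement's English description precedes it below -/
import Mathlib

section
/- Let G be a finite closed set of sequents with pairwise disjoint left label sets and pairwise disjoint right label sets, and S ∈ G. Then |v_l([S]_G)| + 1 ≥ |[S]_G|, where [S]_G is the least closed subset of G containing S and v_l([S]_G) is the union of the left label sets of its members. -/
/-- Reachability from `S` within `K` in `n` steps, where steps connect
sequents sharing a label (left of one, right of the other). -/
private def reachN {α : Type*} (vl vr : α → Finset ℕ) (K : Finset α) (S : α) :
    ℕ → α → Prop
  | 0, a => a = S
  | n+1, a => ∃ b, reachN vl vr K S n b ∧ b ∈ K ∧ a ∈ K ∧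
      ∃ x, (x ∈ vl b ∧ x ∈ vr a) ∨ (x ∈ vr b ∧ x ∈ vl a)

/-- The cardinality of the minimal closed sub-hypersequent [S]_G exceeds
the number of its left labels by at most one. -/
theorem stmt_7 {α : Type*} [DecidableEq α] (G : Finset α)
    (vl vr : α → Finset ℕ)
    (hl : ∀ a ∈ G, ∀ b ∈ G, a ≠ b → Disjoint (vl a) (vl b))
    (hr : ∀ a ∈ G, ∀ b ∈ G, a ≠ b → Disjoint (vr a) (vr b))
    (hG : G.biUnion vl = G.biUnion vr)
    (S : α) (hS : S ∈ G)
    (K : Finset α) (hKsub : K ⊆ G) (hSK : S ∈ K)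
    (hKc : K.biUnion vl = K.biUnion vr)
    (hKmin : ∀ H : Finset α, H ⊆ G → S ∈ H → H.biUnion vl = H.biUnion vr → K ⊆ H) :
    (K.biUnion vl).card + 1 ≥ K.card := by
  classical
  -- uniqueness of owners of labels
  have uniqL : ∀ a ∈ K, ∀ b ∈ K, ∀ x : ℕ, x ∈ vl a → x ∈ vl b → a = b := by
    intro a ha b hb x hxa hxb
    by_contra hne
    exact Finset.disjoint_left.mp (hl a (hKsub ha) b (hKsub hb) hne) hxa hxb
  have uniqR : ∀ a ∈ K, ∀ b ∈ K, ∀ x : ℕ, x ∈ vr a → x ∈ vr b → a = b := by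
    intro a ha b hb x hxa hxb
    by_contra hne
    exact Finset.disjoint_left.mp (hr a (hKsub ha) b (hKsub hb) hne) hxa hxb
  -- every element of K is reachable from S
  have hreach : ∀ a ∈ K, ∃ n, reachN vl vr K S n a := by
    intro a ha
    set C := K.filter (fun c => ∃ n, reachN vl vr K S n c) with hC
    have hCsub : C ⊆ K := Finset.filter_subset _ _
    have hSC : S ∈ C := Finset.mem_filter.mpr ⟨hSK, 0, rfl⟩
    have hclosed : C.biUnion vl = C.biUnion vr := by
      apply Finset.Subset.antisymm
      · intro x hx
        rcases Finset.mem_biUnion.mp hx with ⟨c, hc, hxc⟩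
        have hcK := hCsub hc
        have hx' : x ∈ K.biUnion vr := by
          rw [← hKc]; exact Finset.mem_biUnion.mpr ⟨c, hcK, hxc⟩
        rcases Finset.mem_biUnion.mp hx' with ⟨b, hbK, hxb⟩
        rcases (Finset.mem_filter.mp hc).2 with ⟨n, hn⟩
        exact Finset.mem_biUnion.mpr ⟨b,
          Finset.mem_filter.mpr ⟨hbK, n+1, c, hn, hcK, hbK, x, Or.inl ⟨hxc, hxb⟩⟩, hxb⟩
      · intro x hx
        rcases Finset.mem_biUnion.mp hx with ⟨c, hc, hxc⟩
        have hcK := hCsub hc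
        have hx' : x ∈ K.biUnion vl := by
          rw [hKc]; exact Finset.mem_biUnion.mpr ⟨c, hcK, hxc⟩
        rcases Finset.mem_biUnion.mp hx' with ⟨b, hbK, hxb⟩
        rcases (Finset.mem_filter.mp hc).2 with ⟨n, hn⟩
        exact Finset.mem_biUnion.mpr ⟨b,
          Finset.mem_filter.mpr ⟨hbK, n+1, c, hn, hcK, hbK, x, Or.inr ⟨hxc, hxb⟩⟩, hxb⟩
    have hKC := hKmin C (hCsub.trans hKsub) hSC hclosed
    exact (Finset.mem_filter.mp (hKC ha)).2
  -- distance from S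
  let d : α → ℕ := fun a => if h : ∃ n, reachN vl vr K S n a then Nat.find h else 0
  -- each non-S element has a "last edge" with a closer neighbor
  have key : ∀ a ∈ K, a ≠ S → ∃ x, x ∈ K.biUnion vl ∧ ∃ b ∈ K, d b < d a ∧
      ((x ∈ vl b ∧ x ∈ vr a) ∨ (x ∈ vr b ∧ x ∈ vl a)) := by
    intro a ha hne
    have h := hreach a ha
    have hda : d a = Nat.find h := by simp only [d, dif_pos h]
    have hspec : reachN vl vr K S (Nat.find h) a := Nat.find_spec h
    cases hm : Nat.find h with
    | zero =>
      rw [hm] at hspec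
      exact absurd hspec hne
    | succ m =>
      rw [hm] at hspec
      rcases hspec with ⟨b, hb, hbK, haK, x, hedge⟩
      have hb' : ∃ n, reachN vl vr K S n b := ⟨m, hb⟩
      have hdb : d b ≤ m := by
        simp only [d, dif_pos hb']
        exact Nat.find_le hb
      have hxl : x ∈ K.biUnion vl := by
        rcases hedge with ⟨hxb, _⟩ | ⟨_, hxa⟩
        · exact Finset.mem_biUnion.mpr ⟨b, hbK, hxb⟩
        · exact Finset.mem_biUnion.mpr ⟨a, ha, hxa⟩
      exact ⟨x, hxl, b, hbK, by omega, hedge⟩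
  -- injection from K.erase S into K.biUnion vl
  let f : α → ℕ := fun a =>
    if h : ∃ x, x ∈ K.biUnion vl ∧ ∃ b ∈ K, d b < d a ∧
        ((x ∈ vl b ∧ x ∈ vr a) ∨ (x ∈ vr b ∧ x ∈ vl a)) then h.choose else 0
  have hcard : (K.erase S).card ≤ (K.biUnion vl).card := by
    apply Finset.card_le_card_of_injOn f
    · intro a ha
      have haK : a ∈ K := Finset.mem_of_mem_erase ha
      have hne : a ≠ S := Finset.ne_of_mem_erase ha
      have h := key a haK hne
      simp only [f, dif_pos h]
      exact h.choose_spec.1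
    · intro a ha a' ha' hfe
      have haK : a ∈ K := Finset.mem_of_mem_erase ha
      have haK' : a' ∈ K := Finset.mem_of_mem_erase ha'
      have h := key a haK (Finset.ne_of_mem_erase ha)
      have h' := key a' haK' (Finset.ne_of_mem_erase ha')
      have hfa : f a = h.choose := by simp only [f, dif_pos h]
      have hfa' : f a' = h'.choose := by simp only [f, dif_pos h']
      obtain ⟨-, b, hbK, hdb, hedge⟩ := h.choose_spec
      obtain ⟨-, b', hbK', hdb', hedge'⟩ := h'.choose_spec
      rw [hfa, hfa'] at hfe
      set x := h.choose with hx
      rw [← hfe] at hedge'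
      by_contra hne
      rcases hedge with ⟨hxb, hxa⟩ | ⟨hxb, hxa⟩ <;>
        rcases hedge' with ⟨hxb', hxa'⟩ | ⟨hxb', hxa'⟩
      · exact hne (uniqR a haK a' haK' x hxa hxa')
      · have e1 : b = a' := uniqL b hbK a' haK' x hxb hxa'
        have e2 : a = b' := uniqR a haK b' hbK' x hxa hxb'
        rw [e1] at hdb; rw [← e2] at hdb'; omega
      · have e1 : a = b' := uniqL a haK b' hbK' x hxa hxb'
        have e2 : b = a' := uniqR b hbK a' haK' x hxb hxa'
        rw [e2] at hdb; rw [← e1] at hdb'; omega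
      · exact hne (uniqL a haK a' haK' x hxa hxa')
  have hK1 : 1 ≤ K.card := Finset.card_pos.mpr ⟨S, hSK⟩
  have herase : (K.erase S).card = K.card - 1 := Finset.card_erase_of_mem hSK
  omega
end

section
/- Let G be a finite set of sequents with pairwise disjoint left label sets and pairwise disjoint right label sets. Let H', H'' be two additional finite sets of sequents, each disjoint from G and with labels compatible with G (all disjointness conditions on each side hold in G ∪ H' and in G ∪ H''), such that G ∪ H' and G ∪ H'' are both closed, and such that v_l(H') \ v_r(H') = v_l(H'') \ v_r(H'') and v_r(H') \ v_l(H') = v_r(H'') \ v_l(H''). Then [H']_{G∪H'} \ H' = [H'']_{G∪H''} \ H'', where [X]_Y denotes the least closed subset of Y containing X. -/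
private lemma stmt8_sets {P Q L1 R1 L2 R2 : Finset ℕ}
    (hPL : Disjoint P L1) (hQR : Disjoint Q R1)
    (h : P ∪ L1 = Q ∪ R1) (h1 : L1 \ R1 = L2 \ R2) (h2 : R1 \ L1 = R2 \ L2) :
    P ∪ L2 = Q ∪ R2 := by
  ext x
  have d1 : x ∈ P → x ∉ L1 := fun h' => Finset.disjoint_left.mp hPL h'
  have d2 : x ∈ Q → x ∉ R1 := fun h' => Finset.disjoint_left.mp hQR h'
  have e0 := Finset.ext_iff.mp h x
  have e1 := Finset.ext_iff.mp h1 x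
  have e2 := Finset.ext_iff.mp h2 x
  simp only [Finset.mem_union, Finset.mem_sdiff] at e0 e1 e2 ⊢
  constructor
  · rintro (hP | hL2)
    · by_cases hQ : x ∈ Q
      · exact Or.inl hQ
      · rcases e0.mp (Or.inl hP) with h' | h'
        · exact absurd h' hQ
        · exact Or.inr (e2.mp ⟨h', d1 hP⟩).1
    · by_cases hR2 : x ∈ R2
      · exact Or.inr hR2
      · rcases e0.mp (Or.inr (e1.mpr ⟨hL2, hR2⟩).1) with h' | h'
        · exact Or.inl h'
        · exact absurd h' (e1.mpr ⟨hL2, hR2⟩).2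
  · rintro (hQ | hR2)
    · by_cases hP : x ∈ P
      · exact Or.inl hP
      · rcases e0.mpr (Or.inl hQ) with h' | h'
        · exact absurd h' hP
        · exact Or.inr (e1.mp ⟨h', d2 hQ⟩).1
    · by_cases hL2 : x ∈ L2
      · exact Or.inr hL2
      · rcases e0.mpr (Or.inr (e2.mpr ⟨hR2, hL2⟩).1) with h' | h'
        · exact Or.inl h'
        · exact absurd h' (e2.mpr ⟨hR2, hL2⟩).2

private lemma stmt8_biU {α : Type*} [DecidableEq α] (s t : Finset α)
    (v : α → Finset ℕ) : (s ∪ t).biUnion v = s.biUnion v ∪ t.biUnion v := by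
  ext x
  simp only [Finset.mem_biUnion, Finset.mem_union, or_and_right, exists_or]

private lemma stmt8_one {α : Type*} [DecidableEq α]
    (G H1 H2 : Finset α) (vl vr : α → Finset ℕ)
    (hd1 : Disjoint G H1)
    (hl1 : ∀ a ∈ G ∪ H1, ∀ b ∈ G ∪ H1, a ≠ b → Disjoint (vl a) (vl b))
    (hr1 : ∀ a ∈ G ∪ H1, ∀ b ∈ G ∪ H1, a ≠ b → Disjoint (vr a) (vr b))
    (hsym1 : H1.biUnion vl \ H1.biUnion vr = H2.biUnion vl \ H2.biUnion vr)
    (hsym2 : H1.biUnion vr \ H1.biUnion vl = H2.biUnion vr \ H2.biUnion vl)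
    (K1 : Finset α) (hK1sub : K1 ⊆ G ∪ H1) (hK1H : H1 ⊆ K1)
    (hK1c : K1.biUnion vl = K1.biUnion vr)
    (K2 : Finset α) (hK2H : H2 ⊆ K2)
    (hK2min : ∀ K : Finset α, K ⊆ G ∪ H2 → H2 ⊆ K →
      K.biUnion vl = K.biUnion vr → K2 ⊆ K) :
    K2 \ H2 ⊆ K1 \ H1 := by
  set S : Finset α := K1 \ H1 with hS
  have hSG : S ⊆ G := by
    intro x hx
    rw [hS, Finset.mem_sdiff] at hx
    rcases Finset.mem_union.mp (hK1sub hx.1) with h | h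
    · exact h
    · exact absurd h hx.2
  have hSH1 : Disjoint S H1 := Finset.sdiff_disjoint
  have hK1eq : K1 = S ∪ H1 := by
    rw [hS, Finset.sdiff_union_self_eq_union, Finset.union_eq_left.mpr hK1H]
  -- disjointness of label unions
  have hdisj : ∀ (v : α → Finset ℕ),
      (∀ a ∈ G ∪ H1, ∀ b ∈ G ∪ H1, a ≠ b → Disjoint (v a) (v b)) →
      Disjoint (S.biUnion v) (H1.biUnion v) := by
    intro v hv
    rw [Finset.disjoint_biUnion_left]
    intro a ha
    rw [Finset.disjoint_biUnion_right]
    intro b hb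
    exact hv a (Finset.mem_union_left _ (hSG ha)) b (Finset.mem_union_right _ hb)
      (fun h => Finset.disjoint_left.mp hSH1 ha (h ▸ hb))
  have hbal : S.biUnion vl ∪ H1.biUnion vl = S.biUnion vr ∪ H1.biUnion vr := by
    rw [← stmt8_biU, ← stmt8_biU, ← hK1eq]
    exact hK1c
  have hbal2 : S.biUnion vl ∪ H2.biUnion vl = S.biUnion vr ∪ H2.biUnion vr :=
    stmt8_sets (hdisj vl hl1) (hdisj vr hr1) hbal hsym1 hsym2
  have hclosed : (S ∪ H2).biUnion vl = (S ∪ H2).biUnion vr := by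
    rw [stmt8_biU, stmt8_biU]; exact hbal2
  have hsub : K2 ⊆ S ∪ H2 :=
    hK2min (S ∪ H2) (Finset.union_subset_union hSG (Finset.Subset.refl H2))
      Finset.subset_union_right hclosed
  intro x hx
  rw [Finset.mem_sdiff] at hx
  rcases Finset.mem_union.mp (hsub hx.1) with h | h
  · exact h
  · exact absurd h hx.2

/-- Lemma 5.3(iii): the closure added to H inside G depends only on the
unbalanced labels of H. -/
theorem stmt_8 {α : Type*} [DecidableEq α]
    (G H1 H2 : Finset α) (vl vr : α → Finset ℕ)
    (hd1 : Disjoint G H1) (hd2 : Disjoint G H2)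
    (hl1 : ∀ a ∈ G ∪ H1, ∀ b ∈ G ∪ H1, a ≠ b → Disjoint (vl a) (vl b))
    (hr1 : ∀ a ∈ G ∪ H1, ∀ b ∈ G ∪ H1, a ≠ b → Disjoint (vr a) (vr b))
    (hl2 : ∀ a ∈ G ∪ H2, ∀ b ∈ G ∪ H2, a ≠ b → Disjoint (vl a) (vl b))
    (hr2 : ∀ a ∈ G ∪ H2, ∀ b ∈ G ∪ H2, a ≠ b → Disjoint (vr a) (vr b))
    (hc1 : (G ∪ H1).biUnion vl = (G ∪ H1).biUnion vr)
    (hc2 : (G ∪ H2).biUnion vl = (G ∪ H2).biUnion vr)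
    (hsym1 : H1.biUnion vl \ H1.biUnion vr = H2.biUnion vl \ H2.biUnion vr)
    (hsym2 : H1.biUnion vr \ H1.biUnion vl = H2.biUnion vr \ H2.biUnion vl)
    (K1 : Finset α) (hK1sub : K1 ⊆ G ∪ H1) (hK1H : H1 ⊆ K1)
    (hK1c : K1.biUnion vl = K1.biUnion vr)
    (hK1min : ∀ K : Finset α, K ⊆ G ∪ H1 → H1 ⊆ K →
      K.biUnion vl = K.biUnion vr → K1 ⊆ K)
    (K2 : Finset α) (hK2sub : K2 ⊆ G ∪ H2) (hK2H : H2 ⊆ K2)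
    (hK2c : K2.biUnion vl = K2.biUnion vr)
    (hK2min : ∀ K : Finset α, K ⊆ G ∪ H2 → H2 ⊆ K →
      K.biUnion vl = K.biUnion vr → K2 ⊆ K) :
    K1 \ H1 = K2 \ H2 := by
  apply Finset.Subset.antisymm
  · exact stmt8_one G H2 H1 vl vr hd2 hl2 hr2 hsym1.symm hsym2.symm
      K2 hK2sub hK2H hK2c K1 hK1H hK1min
  · exact stmt8_one G H1 H2 vl vr hd1 hl1 hr1 hsym1 hsym2
      K1 hK1sub hK1H hK1c K2 hK2H hK2min
end

section
/- Let G be a finite set of sequents (pairwise disjoint left label sets, pairwise disjoint right label sets) and suppose S1, S2 ∈ G are distinct with [S1]_G ∩ [S2]_G = ∅, where G itself is closed. Let G' be obtained from G by deleting S1 and S2 and adding a single new sequent S with v_l(S) = v_l(S1) ∪ v_l(S2) and v_r(S) = v_r(S1) ∪ v_r(S2). Then G' is closed, [S]_{G'} = ([S1]_G \ {S1}) ∪ ([S2]_G \ {S2}) ∪ {S}, and |v_l([S]_{G'})| − |[S]_{G'}| + 1 = (|v_l([S1]_G)| − |[S1]_G| + 1) + (|v_l([S2]_G)| − |[S2]_G|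 + 1). -/
section aux

variable {α : Type*} [DecidableEq α]

private lemma biUnion_split (f : α → Finset ℕ) (A : Finset α) (T : α) (hT : T ∈ A) :
    A.biUnion f = f T ∪ (A \ {T}).biUnion f := by
  rw [← Finset.erase_eq]
  conv_lhs => rw [← Finset.insert_erase hT]
  rw [Finset.biUnion_insert]

private lemma biUnion_split2 (f : α → Finset ℕ) (A : Finset α) (T1 T2 : α)
    (h1 : T1 ∈ A) (h2 : T2 ∈ A) :
    A.biUnion f = f T1 ∪ f T2 ∪ (A \ {T1, T2}).biUnion f := by
  ext x
  simp only [Finset.mem_biUnion, Finset.mem_union, Finset.mem_sdiff, Finset.mem_insert,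
    Finset.mem_singleton]
  constructor
  · rintro ⟨a, ha, hx⟩
    by_cases e1 : a = T1
    · subst e1; tauto
    by_cases e2 : a = T2
    · subst e2; tauto
    exact Or.inr ⟨a, ⟨ha, by tauto⟩, hx⟩
  · rintro ((h | h) | ⟨a, ⟨ha, -⟩, hx⟩)
    exacts [⟨T1, h1, h⟩, ⟨T2, h2, h⟩, ⟨a, ha, hx⟩]

end aux

/-- Lemma 5.5: merging two components with disjoint minimal closed
sub-hypersequents yields a closed hypersequent whose minimal closed
sub-hypersequent at the merged component is the union, and the defects add. -/
theorem stmt_9 {α : Type*} [DecidableEq α] (G : Finset α)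
    (vl vr : α → Finset ℕ)
    (hl : ∀ a ∈ G, ∀ b ∈ G, a ≠ b → Disjoint (vl a) (vl b))
    (hr : ∀ a ∈ G, ∀ b ∈ G, a ≠ b → Disjoint (vr a) (vr b))
    (hG : G.biUnion vl = G.biUnion vr)
    (S1 S2 : α) (hS1 : S1 ∈ G) (hS2 : S2 ∈ G) (hne : S1 ≠ S2)
    (K1 : Finset α) (hK1sub : K1 ⊆ G) (hS1K1 : S1 ∈ K1)
    (hK1c : K1.biUnion vl = K1.biUnion vr)
    (hK1min : ∀ H : Finset α, H ⊆ G → S1 ∈ H → H.biUnion vl = H.biUnion vr → K1 ⊆ H)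
    (K2 : Finset α) (hK2sub : K2 ⊆ G) (hS2K2 : S2 ∈ K2)
    (hK2c : K2.biUnion vl = K2.biUnion vr)
    (hK2min : ∀ H : Finset α, H ⊆ G → S2 ∈ H → H.biUnion vl = H.biUnion vr → K2 ⊆ H)
    (hdisj : K1 ∩ K2 = ∅)
    (S : α) (hSnew : S ∉ G)
    (hvlS : vl S = vl S1 ∪ vl S2) (hvrS : vr S = vr S1 ∪ vr S2) :
    (insert S (G \ {S1, S2})).biUnion vl = (insert S (G \ {S1, S2})).biUnion vr ∧
    ∀ K : Finset α, K ⊆ insert S (G \ {S1, S2}) → S ∈ K →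
      K.biUnion vl = K.biUnion vr →
      (∀ H : Finset α, H ⊆ insert S (G \ {S1, S2}) → S ∈ H →
        H.biUnion vl = H.biUnion vr → K ⊆ H) →
      K = (K1 \ {S1}) ∪ (K2 \ {S2}) ∪ {S} ∧
      ((K.biUnion vl).card : ℤ) - K.card + 1 =
        (((K1.biUnion vl).card : ℤ) - K1.card + 1) +
        (((K2.biUnion vl).card : ℤ) - K2.card + 1) := by
  classical
  have hK1K2 : Disjoint K1 K2 := Finset.disjoint_iff_inter_eq_empty.mpr hdisj
  have hS2K1 : S2 ∉ K1 := fun h => (Finset.disjoint_left.mp hK1K2 h) hS2K2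
  have hS1K2 : S1 ∉ K2 := fun h => (Finset.disjoint_left.mp hK1K2 hS1K1) h
  -- biUnions over the new set equal the old ones
  have hins : ∀ f : α → Finset ℕ, f S = f S1 ∪ f S2 →
      (insert S (G \ {S1, S2})).biUnion f = G.biUnion f := by
    intro f hf
    rw [Finset.biUnion_insert, hf, biUnion_split2 f G S1 S2 hS1 hS2]
    all_goals (ext x; simp only [Finset.mem_union]; tauto)
  have hclosed : (insert S (G \ {S1, S2})).biUnion vl
      = (insert S (G \ {S1, S2})).biUnion vr := by
    rw [hins vl hvlS, hins vr hvrS, hG]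
  refine ⟨hclosed, ?_⟩
  intro K hKsub hSK hKc hKmin
  set K0 : Finset α := (K1 \ {S1}) ∪ (K2 \ {S2}) ∪ {S} with hK0
  -- K0 is contained in the new set
  have hK0sub : K0 ⊆ insert S (G \ {S1, S2}) := by
    intro x hx
    simp only [hK0, Finset.mem_union, Finset.mem_sdiff, Finset.mem_singleton] at hx
    rcases hx with (⟨hx, hx1⟩ | ⟨hx, hx2⟩) | hx
    · have hxG := hK1sub hx
      have : x ≠ S2 := fun e => (e ▸ hS2K1) hx
      simp only [Finset.mem_insert, Finset.mem_sdiff, Finset.mem_singleton]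
      exact Or.inr ⟨hxG, by simp [hx1, this]⟩
    · have hxG := hK2sub hx
      have : x ≠ S1 := fun e => (e ▸ hS1K2) hx
      simp only [Finset.mem_insert, Finset.mem_sdiff, Finset.mem_singleton]
      exact Or.inr ⟨hxG, by simp [this, hx2]⟩
    · simp [hx]
  have hSK0 : S ∈ K0 := by simp [hK0]
  -- biUnions over K0 are the unions of those over K1 and K2
  have hK0bi : ∀ f : α → Finset ℕ, f S = f S1 ∪ f S2 →
      K0.biUnion f = K1.biUnion f ∪ K2.biUnion f := by
    intro f hf
    rw [hK0]
    ext x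
    simp only [Finset.mem_biUnion, Finset.mem_union, Finset.mem_sdiff, Finset.mem_singleton]
    constructor
    · rintro ⟨a, ((⟨ha, -⟩ | ⟨ha, -⟩) | ha), hx⟩
      · exact Or.inl ⟨a, ha, hx⟩
      · exact Or.inr ⟨a, ha, hx⟩
      · rw [ha, hf, Finset.mem_union] at hx
        rcases hx with hx | hx
        exacts [Or.inl ⟨S1, hS1K1, hx⟩, Or.inr ⟨S2, hS2K2, hx⟩]
    · rintro (⟨a, ha, hx⟩ | ⟨a, ha, hx⟩)
      · by_cases e : a = S1
        · subst e
          exact ⟨S, Or.inr rfl, by rw [hf, Finset.mem_union]; exact Or.inl hx⟩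
        · exact ⟨a, Or.inl (Or.inl ⟨ha, e⟩), hx⟩
      · by_cases e : a = S2
        · subst e
          exact ⟨S, Or.inr rfl, by rw [hf, Finset.mem_union]; exact Or.inr hx⟩
        · exact ⟨a, Or.inl (Or.inr ⟨ha, e⟩), hx⟩
  have hK0c : K0.biUnion vl = K0.biUnion vr := by
    rw [hK0bi vl hvlS, hK0bi vr hvrS, hK1c, hK2c]
  -- so K ⊆ K0 by minimality of K
  have hKsubK0 : K ⊆ K0 := hKmin K0 hK0sub hSK0 hK0c
  -- conversely K0 ⊆ K, via H = (K \ {S}) ∪ {S1, S2}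
  have hKG : K \ {S} ⊆ G \ {S1, S2} := by
    intro x hx
    simp only [Finset.mem_sdiff, Finset.mem_singleton] at hx
    have := hKsub hx.1
    simp only [Finset.mem_insert] at this
    tauto
  set H : Finset α := (K \ {S}) ∪ {S1, S2} with hH
  have hHsub : H ⊆ G := by
    intro x hx
    simp only [hH, Finset.mem_union, Finset.mem_insert, Finset.mem_singleton] at hx
    rcases hx with hx | hx | hx
    · exact (Finset.mem_sdiff.mp (hKG hx)).1
    · exact hx ▸ hS1
    · exact hx ▸ hS2
  have hHbi : ∀ f : α → Finset ℕ, f S = f S1 ∪ f S2 → H.biUnion f = K.biUnion f := by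
    intro f hf
    rw [hH]
    ext x
    simp only [Finset.mem_biUnion, Finset.mem_union, Finset.mem_sdiff, Finset.mem_insert,
      Finset.mem_singleton]
    constructor
    · rintro ⟨a, (⟨ha, -⟩ | ha | ha), hx⟩
      · exact ⟨a, ha, hx⟩
      · exact ⟨S, hSK, by rw [hf, Finset.mem_union]; exact Or.inl (ha ▸ hx)⟩
      · exact ⟨S, hSK, by rw [hf, Finset.mem_union]; exact Or.inr (ha ▸ hx)⟩
    · rintro ⟨a, ha, hx⟩
      by_cases e : a = S
      · subst e
        rw [hf, Finset.mem_union] at hx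
        rcases hx with hx | hx
        exacts [⟨S1, Or.inr (Or.inl rfl), hx⟩, ⟨S2, Or.inr (Or.inr rfl), hx⟩]
      · exact ⟨a, Or.inl ⟨ha, e⟩, hx⟩
  have hHc : H.biUnion vl = H.biUnion vr := by rw [hHbi vl hvlS, hHbi vr hvrS, hKc]
  have hS1H : S1 ∈ H := by simp [hH]
  have hS2H : S2 ∈ H := by simp [hH]
  have hK1H : K1 ⊆ H := hK1min H hHsub hS1H hHc
  have hK2H : K2 ⊆ H := hK2min H hHsub hS2H hHc
  have hK0subK : K0 ⊆ K := by
    intro x hx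
    simp only [hK0, Finset.mem_union, Finset.mem_sdiff, Finset.mem_singleton] at hx
    rcases hx with (⟨hx, hx1⟩ | ⟨hx, hx2⟩) | hx
    · have := hK1H hx
      simp only [hH, Finset.mem_union, Finset.mem_sdiff, Finset.mem_insert,
        Finset.mem_singleton] at this
      rcases this with ⟨h, -⟩ | h | h
      · exact h
      · exact absurd h hx1
      · exact absurd (h ▸ hx) hS2K1
    · have := hK2H hx
      simp only [hH, Finset.mem_union, Finset.mem_sdiff, Finset.mem_insert,
        Finset.mem_singleton] at this
      rcases this with ⟨h, -⟩ | h | h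
      · exact h
      · exact absurd (h ▸ hx) hS1K2
      · exact absurd h hx2
    · exact hx ▸ hSK
  have hKeq : K = K0 := le_antisymm hKsubK0 hK0subK
  refine ⟨hKeq, ?_⟩
  -- cardinalities
  have hSK1 : S ∉ K1 := fun h => hSnew (hK1sub h)
  have hSK2 : S ∉ K2 := fun h => hSnew (hK2sub h)
  have hd1 : Disjoint (K1 \ {S1}) (K2 \ {S2}) :=
    Finset.disjoint_of_subset_left Finset.sdiff_subset
      (Finset.disjoint_of_subset_right Finset.sdiff_subset hK1K2)
  have hd2 : Disjoint ((K1 \ {S1}) ∪ (K2 \ {S2})) ({S} : Finset α) := by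
    simp only [Finset.disjoint_singleton_right, Finset.mem_union, Finset.mem_sdiff,
      Finset.mem_singleton]
    tauto
  have hc1 : (K1 \ {S1}).card = K1.card - 1 := by
    rw [← Finset.erase_eq]; exact Finset.card_erase_of_mem hS1K1
  have hc2 : (K2 \ {S2}).card = K2.card - 1 := by
    rw [← Finset.erase_eq]; exact Finset.card_erase_of_mem hS2K2
  have hK1pos : 1 ≤ K1.card := Finset.card_pos.mpr ⟨S1, hS1K1⟩
  have hK2pos : 1 ≤ K2.card := Finset.card_pos.mpr ⟨S2, hS2K2⟩
  have hcard : K.card + 1 = K1.card + K2.card := by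
    rw [hKeq, hK0, Finset.card_union_of_disjoint hd2, Finset.card_union_of_disjoint hd1,
      hc1, hc2, Finset.card_singleton]
    omega
  have hvldisj : Disjoint (K1.biUnion vl) (K2.biUnion vl) := by
    rw [Finset.disjoint_left]
    intro x hx1 hx2
    obtain ⟨a, ha, hxa⟩ := Finset.mem_biUnion.mp hx1
    obtain ⟨b, hb, hxb⟩ := Finset.mem_biUnion.mp hx2
    have hab : a ≠ b := fun e => (Finset.disjoint_left.mp hK1K2 ha) (e ▸ hb)
    exact (Finset.disjoint_left.mp (hl a (hK1sub ha) b (hK2sub hb) hab) hxa) hxb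
  have hcardv : (K.biUnion vl).card = (K1.biUnion vl).card + (K2.biUnion vl).card := by
    rw [hKeq, hK0bi vl hvlS, Finset.card_union_of_disjoint hvldisj]
  omega
end

section
/- In the hypersequent calculus with rules (ID), (COM), (∧r), (CUT) described below, if ⊢ Γ1 ⇒ A, Δ1 and ⊢ Γ2 ⇒ B, Δ2, then ⊢ (Γ1 ⇒ A∧B, Δ1 | Γ2 ⇒ A∧B, Δ2). -/
/-- Formulas: propositional variables, binary connectives ⊙, →, ∧, ∨,
and constants ⊤, ⊥, t, f. -/
inductive Fml : Type
  | var : ℕ → Fml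
  | odot : Fml → Fml → Fml
  | imp : Fml → Fml → Fml
  | conj : Fml → Fml → Fml
  | disj : Fml → Fml → Fml
  | top : Fml
  | bot : Fml
  | t : Fml
  | f : Fml

/-- A sequent is a pair of finite multisets of formulas. -/
abbrev HSeq := Multiset Fml × Multiset Fml

/-- A hypersequent is a finite multiset of sequents. -/
abbrev Hyper := Multiset HSeq

/-- The hypersequent calculus with (ID), (COM), (∧r) and (CUT). -/
inductive Deriv : Hyper → Prop
  | id (A : Fml) : Deriv {({A}, {A})}
  | com {G1 G2 : Hyper} (Γ1 P1 S1 Δ1 Γ2 P2 S2 Δ2 : Multiset Fml) :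
      Deriv (G1 + {(Γ1 + P1, S1 + Δ1)}) → Deriv (G2 + {(Γ2 + P2, S2 + Δ2)}) →
      Deriv (G1 + G2 + {(Γ1 + Γ2, Δ1 + Δ2), (P1 + P2, S1 + S2)})
  | andr {G1 G2 : Hyper} (Γ Δ : Multiset Fml) (A B : Fml) :
      Deriv (G1 + {(Γ, A ::ₘ Δ)}) → Deriv (G2 + {(Γ, B ::ₘ Δ)}) →
      Deriv (G1 + G2 + {(Γ, (Fml.conj A B) ::ₘ Δ)})
  | cut {G1 G2 : Hyper} (Γ1 Δ1 Γ2 Δ2 : Multiset Fml) (A : Fml) :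
      Deriv (G1 + {(A ::ₘ Γ1, Δ1)}) → Deriv (G2 + {(Γ2, A ::ₘ Δ2)}) →
      Deriv (G1 + G2 + {(Γ1 + Γ2, Δ1 + Δ2)})

theorem Deriv.conv {H H' : Hyper} (d : Deriv H) (e : H = H') : Deriv H' := e ▸ d

/-- Lemma 4.1(i): from ⊢ Γ1 ⇒ A, Δ1 and ⊢ Γ2 ⇒ B, Δ2 derive
⊢ Γ1 ⇒ A∧B, Δ1 | Γ2 ⇒ A∧B, Δ2. -/
theorem stmt_11 (Γ1 Δ1 Γ2 Δ2 : Multiset Fml) (A B : Fml)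
    (h1 : Deriv {(Γ1, A ::ₘ Δ1)}) (h2 : Deriv {(Γ2, B ::ₘ Δ2)}) :
    Deriv {(Γ1, (Fml.conj A B) ::ₘ Δ1), (Γ2, (Fml.conj A B) ::ₘ Δ2)} := by
  have dA : Deriv {(({A} : Multiset Fml), ({A} : Multiset Fml))} := Deriv.id A
  have dB : Deriv {(({B} : Multiset Fml), ({B} : Multiset Fml))} := Deriv.id B
  -- Step 1: A ⇒ B | B ⇒ A
  have s1 : Deriv {(({A} : Multiset Fml), ({B} : Multiset Fml)), ({B}, {A})} :=
    (Deriv.com (G1 := 0) (G2 := 0) {A} 0 {A} 0 0 {B} 0 {B}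
      (dA.conv (by simp)) (dB.conv (by simp))).conv (by simp)
  -- Step 2: A ⇒ A∧B | B ⇒ A
  have s2 : Deriv {(({A} : Multiset Fml), ({Fml.conj A B} : Multiset Fml)), ({B}, {A})} :=
    (Deriv.andr (G1 := 0) (G2 := {({B}, {A})}) {A} 0 A B
      (dA.conv (by simp)) (s1.conv (by simp [Multiset.singleton_add]; exact Multiset.pair_comm _ _))).conv
      (by simp [Multiset.singleton_add]; exact Multiset.pair_comm _ _)
  -- Step 3: A ⇒ A∧B | B ⇒ A∧B
  have s3 : Deriv {(({A} : Multiset Fml), ({Fml.conj A B} : Multiset Fml)),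
      ({B}, {Fml.conj A B})} :=
    (Deriv.andr (G1 := {({A}, {Fml.conj A B})}) (G2 := 0) {B} 0 A B
      (s2.conv (by simp [Multiset.singleton_add])) (dB.conv (by simp))).conv
      (by simp [Multiset.singleton_add])
  -- Step 4: cut on A with h1 : Γ1 ⇒ A∧B, Δ1 | B ⇒ A∧B
  have s4 : Deriv {(Γ1, (Fml.conj A B) ::ₘ Δ1), (({B} : Multiset Fml), ({Fml.conj A B} : Multiset Fml))} :=
    (Deriv.cut (G1 := {({B}, {Fml.conj A B})}) (G2 := 0) 0 {Fml.conj A B} Γ1 Δ1 A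
      (s3.conv (by simp [Multiset.singleton_add]; exact Multiset.pair_comm _ _)) (h1.conv (by simp))).conv
      (by simp [Multiset.singleton_add]; exact Multiset.pair_comm _ _)
  -- Step 5: cut on B with h2
  exact (Deriv.cut (G1 := {(Γ1, (Fml.conj A B) ::ₘ Δ1)}) (G2 := 0) 0 {Fml.conj A B} Γ2 Δ2 B
      (s4.conv (by simp [Multiset.singleton_add])) (h2.conv (by simp))).conv
      (by simp [Multiset.singleton_add])
end

section
/- Let G0 = G' | (Γ1, p ⇒ Δ1) | … | (Γn, p ⇒ Δn) | (Π1 ⇒ p, Σ1) | … | (Πm ⇒ p, Σm) with n, m ≥ 1 and D0 as below, and let G2 = G0 | (Γ1, p ⇒ Δ1) (an extra copy of the first p-left component). Then, as multisets, D0(G2) = D0(G0) ∪ { Γ1, Πj ⇒ Δ1, Σj }_{1≤j≤m}; in particular every component of D0(G2) already occurs in D0(G0). -/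
open Multiset
lemma key {α : Type*} (n m : ℕ) (f : Fin (n+2) × Fin (m+1) → α) :
    (Finset.univ : Finset (Fin (n + 2) × Fin (m + 1))).val.map f
      = (Finset.univ : Finset (Fin (m+1))).val.map (fun j => f (0, j))
        + (Finset.univ : Finset (Fin (n+1) × Fin (m+1))).val.map (fun p => f (p.1.succ, p.2)) := by
  have hprod : ∀ (k : ℕ), (Finset.univ : Finset (Fin k × Fin (m + 1))).val
      = ((Finset.univ : Finset (Fin k)).val).bind
          (fun i => ((Finset.univ : Finset (Fin (m+1))).val).map (fun j => (i, j))) := by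
    intro k
    rw [← Finset.univ_product_univ, Finset.product_val]
    rfl
  have hu : (Finset.univ : Finset (Fin (n+2))).val
      = 0 ::ₘ ((Finset.univ : Finset (Fin (n+1))).val).map Fin.succ := by
    rw [Fin.univ_succ, Finset.cons_val, Finset.map_val]
    rfl
  rw [hprod, hprod, hu]
  simp only [Multiset.cons_bind, Multiset.map_add, Multiset.map_map, Multiset.map_bind, Multiset.bind_map, Function.comp]

/-- Lemma 9.1(ii), combinatorial content: duplicating the first p-left
component of the premise of the strong density rule yields a conclusion
D0(G2) equal, as a multiset, to D0(G0) together with one extra copy of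
each component pairing the duplicated row with the p-right components;
in particular every component of D0(G2) already occurs in D0(G0).
Here n+1 indexes the p-left components (n+1 ≥ 1) and m+1 the p-right ones. -/
theorem stmt_17 {F : Type*} (n m : ℕ)
    (G' : Multiset (Multiset F × Multiset F))
    (Γ Δ : Fin (n + 1) → Multiset F)
    (P S : Fin (m + 1) → Multiset F) :
    (G' + ((Finset.univ : Finset (Fin (n + 2) × Fin (m + 1))).val.map
        (fun p => ((Fin.cons (Γ 0) Γ : Fin (n + 2) → Multiset F) p.1 + P p.2, (Fin.cons (Δ 0) Δ : Fin (n + 2) → Multiset F) p.1 + S p.2)))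
      =
     (G' + ((Finset.univ : Finset (Fin (n + 1) × Fin (m + 1))).val.map
        (fun p => (Γ p.1 + P p.2, Δ p.1 + S p.2)))) +
     ((Finset.univ : Finset (Fin (m + 1))).val.map
        (fun j => (Γ 0 + P j, Δ 0 + S j))))
    ∧
    ∀ s ∈ G' + ((Finset.univ : Finset (Fin (n + 2) × Fin (m + 1))).val.map
        (fun p => ((Fin.cons (Γ 0) Γ : Fin (n + 2) → Multiset F) p.1 + P p.2, (Fin.cons (Δ 0) Δ : Fin (n + 2) → Multiset F) p.1 + S p.2))),
      s ∈ G' + ((Finset.univ : Finset (Fin (n + 1) × Fin (m + 1))).val.map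
        (fun p => (Γ p.1 + P p.2, Δ p.1 + S p.2))) := by
  have h := key n m (fun p => ((Fin.cons (Γ 0) Γ : Fin (n + 2) → Multiset F) p.1 + P p.2,
    (Fin.cons (Δ 0) Δ : Fin (n + 2) → Multiset F) p.1 + S p.2))
  simp only [Fin.cons_zero, Fin.cons_succ] at h
  have heq : (G' + ((Finset.univ : Finset (Fin (n + 2) × Fin (m + 1))).val.map
        (fun p => ((Fin.cons (Γ 0) Γ : Fin (n + 2) → Multiset F) p.1 + P p.2, (Fin.cons (Δ 0) Δ : Fin (n + 2) → Multiset F) p.1 + S p.2)))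
      =
     (G' + ((Finset.univ : Finset (Fin (n + 1) × Fin (m + 1))).val.map
        (fun p => (Γ p.1 + P p.2, Δ p.1 + S p.2)))) +
     ((Finset.univ : Finset (Fin (m + 1))).val.map
        (fun j => (Γ 0 + P j, Δ 0 + S j)))) := by
    rw [h, add_comm (Multiset.map _ _) (Multiset.map _ _), ← add_assoc]
  refine ⟨heq, ?_⟩
  intro s hs
  rw [heq, Multiset.mem_add] at hs
  rcases hs with hs | hs
  · exact hs
  · rw [Multiset.mem_add]
    right
    rw [Multiset.mem_map] at hs ⊢
    obtain ⟨j, _, rfl⟩ := hs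
    exact ⟨(0, j), by simp, rfl⟩
end
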